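/- arXiv:1512.07219 — 4 statements merged into one kernel-verified Lean document; each statement's English description precedes it below -/
import Mathlib

section
/- Let $H\in(\tfrac23,1)$. There exists $\delta\in(0,1)$ (depending only on $H$) such that for all $a,b,c> 0$, $(a+b)^{2H}(b+c)^{2H} - \mu_H(a,\,a+b,\,b+c)^2 \;\ge\; \delta\,\big((a+b)^{2H}c^{2H} + (b+c)^{2H}a^{2H}\big)$. (Here $a=s_2-s_1$, $b=t_1-s_2$, $c=t_2-t_1$ corresponds to the ordering $s_1<s_2<t_1<t_2$, and the left-hand side is the determinant of the covariance matrix of the fractional Brownian increments $(B_{t_1}-B_{s_1},B_{t_2}-B_{s_2})$.) -/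
/-!
Put `γ = H - 1/2` and `K_{s,t}(x) = (x - s)₊^γ - (x - t)₊^γ`. Scaling gives
`∫ K_{s,t}² = C |t - s|^{2H}`, so by polarization `∫ K_{s₁,t₁} K_{s₂,t₂}` is `C` times the
covariance of the fBm increments over `[s₁, t₁]` and `[s₂, t₂]`, and the left-hand side is
`C⁻²` times the Gram determinant of `f = K_{0,a+b}` and `g = K_{a,a+b+c}`. As `g` vanishes on
`(-∞, a]`, Cauchy–Schwarz on `(a, ∞)` bounds `⟨f, g⟩²` by `‖g‖²` times `‖f‖²` minus the mass
of `f` on `(0, a]`, which is `a^{2H} / 2H`. This yields the term `(b+c)^{2H} a^{2H}`; the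
other one follows by the symmetry `a ↔ c`.
-/

open Real Set

/-- The covariance `𝔼[B_{u₁}(B_{x+u₂} - B_x)]` of a fractional Brownian motion of
Hurst parameter `H`. -/
noncomputable def mu (H x u₁ u₂ : ℝ) : ℝ :=
  (1/2) * ((x + u₂) ^ (2*H) - x ^ (2*H) - |x + u₂ - u₁| ^ (2*H) + |x - u₁| ^ (2*H))

open MeasureTheory

section CauchySchwarz

variable {α : Type*} [MeasurableSpace α] {μ : Measure α} {f g : α → ℝ}

theorem sq_integral_mul_le_integral_sq_mul_integral_sq
    (hf : Integrable (fun x => f x ^ 2) μ) (hg : Integrable (fun x => g x ^ 2) μ)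
    (hfg : Integrable (fun x => f x * g x) μ) :
    (∫ x, f x * g x ∂μ) ^ 2 ≤ (∫ x, f x ^ 2 ∂μ) * ∫ x, g x ^ 2 ∂μ := by
  have hquad : ∀ t : ℝ, 0 ≤ (∫ x, g x ^ 2 ∂μ) * (t * t) + (-2 * ∫ x, f x * g x ∂μ) * t
      + ∫ x, f x ^ 2 ∂μ := by
    intro t
    have hexpand : ∫ x, (t * g x - f x) ^ 2 ∂μ = (∫ x, g x ^ 2 ∂μ) * (t * t)
        + (-2 * ∫ x, f x * g x ∂μ) * t + ∫ x, f x ^ 2 ∂μ := by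
      have hpt : (fun x => (t * g x - f x) ^ 2)
          = fun x => t ^ 2 * g x ^ 2 - 2 * t * (f x * g x) + f x ^ 2 := by
        funext x; ring
      rw [hpt, integral_add (f := fun x => t ^ 2 * g x ^ 2 - 2 * t * (f x * g x))
        ((hg.const_mul _).sub (hfg.const_mul _)) hf,
        integral_sub (hg.const_mul _) (hfg.const_mul _), integral_const_mul, integral_const_mul]
      ring
    exact hexpand ▸ integral_nonneg fun x => sq_nonneg _
  have hdiscrim := discrim_le_zero hquad
  rw [discrim] at hdiscrim
  linarith

theorem sq_integral_mul_le_setIntegral_sq_mul_integral_sq {s : Set α} (hg₀ : ∀ x ∉ s, g x = 0)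
    (hf : Integrable (fun x => f x ^ 2) μ) (hg : Integrable (fun x => g x ^ 2) μ)
    (hfg : Integrable (fun x => f x * g x) μ) :
    (∫ x, f x * g x ∂μ) ^ 2 ≤ (∫ x in s, f x ^ 2 ∂μ) * ∫ x, g x ^ 2 ∂μ := by
  rw [← setIntegral_eq_integral_of_forall_compl_eq_zero (f := fun x => f x * g x) (s := s)
      fun x hx => by simp [hg₀ x hx],
    ← setIntegral_eq_integral_of_forall_compl_eq_zero (f := fun x => g x ^ 2) (s := s)
      fun x hx => by simp [hg₀ x hx]]
  exact sq_integral_mul_le_integral_sq_mul_integral_sq hf.integrableOn hg.integrableOn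
    hfg.integrableOn

end CauchySchwarz

theorem sq_rpow_eq_rpow_two_mul {y : ℝ} (hy : 0 ≤ y) (p : ℝ) : (y ^ p) ^ 2 = y ^ (2 * p) := by
  rw [← rpow_mul_natCast hy, mul_comm]
  norm_num

-- The Mandelbrot–van Ness kernel of an increment of fractional Brownian motion, in reflected time.
noncomputable def incrementKernel (H s t x : ℝ) : ℝ :=
  max (x - s) 0 ^ (H - 1/2) - max (x - t) 0 ^ (H - 1/2)

noncomputable def kernelConst (H : ℝ) : ℝ := ∫ x, incrementKernel H 0 1 x ^ 2

section Kernel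

variable {H : ℝ}

theorem incrementKernel_eq_zero_of_le {s t x : ℝ} (hs : x ≤ s) (ht : x ≤ t) :
    incrementKernel H s t x = 0 := by
  rw [incrementKernel, max_eq_right (sub_nonpos.2 hs), max_eq_right (sub_nonpos.2 ht), sub_self]

theorem incrementKernel_eq_rpow (hH : 1/2 < H) {s t x : ℝ} (hs : s ≤ x) (ht : x ≤ t) :
    incrementKernel H s t x = (x - s) ^ (H - 1/2) := by
  rw [incrementKernel, max_eq_left (sub_nonneg.2 hs), max_eq_right (sub_nonpos.2 ht),
    zero_rpow (by linarith), sub_zero]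

theorem incrementKernel_nonneg (hH : 1/2 ≤ H) {s t : ℝ} (hst : s ≤ t) (x : ℝ) :
    0 ≤ incrementKernel H s t x :=
  sub_nonneg.2 <| rpow_le_rpow (le_max_right _ _) (max_le_max_right _ (by linarith))
    (by linarith)

theorem incrementKernel_swap (H s t x : ℝ) :
    incrementKernel H t s x = -incrementKernel H s t x := by
  rw [incrementKernel, incrementKernel, neg_sub]

theorem incrementKernel_sq_swap (H s t x : ℝ) :
    incrementKernel H t s x ^ 2 = incrementKernel H s t x ^ 2 := by
  rw [incrementKernel_swap, neg_sq]

theorem incrementKernel_mul_eq (H s₁ t₁ s₂ t₂ x : ℝ) :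
    incrementKernel H s₁ t₁ x * incrementKernel H s₂ t₂ x =
      (incrementKernel H s₁ t₂ x ^ 2 + incrementKernel H s₂ t₁ x ^ 2
        - incrementKernel H s₁ s₂ x ^ 2 - incrementKernel H t₁ t₂ x ^ 2) / 2 := by
  simp only [incrementKernel]
  ring

theorem incrementKernel_sq_eq_scale {s t : ℝ} (hst : s < t) (x : ℝ) :
    incrementKernel H s t x ^ 2 =
      (t - s) ^ (2 * H - 1) * incrementKernel H 0 1 ((x - s) / (t - s)) ^ 2 := by
  have hτ : 0 < t - s := sub_pos.2 hst
  have hscale : ∀ r : ℝ, max (x - r) 0 ^ (H - 1/2) =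
      (t - s) ^ (H - 1/2) * max ((x - s) / (t - s) - (r - s) / (t - s)) 0 ^ (H - 1/2) := by
    intro r
    rw [← mul_rpow hτ.le (le_max_right _ _), mul_max_of_nonneg _ _ hτ.le, mul_zero]
    congr 2
    field_simp
    ring
  rw [incrementKernel, incrementKernel, hscale s, hscale t, sub_self, div_self hτ.ne', ← mul_sub,
    mul_pow, sq_rpow_eq_rpow_two_mul hτ.le]
  ring_nf

theorem continuous_incrementKernel (hH : 1/2 < H) (s t : ℝ) :
    Continuous (incrementKernel H s t) := by
  have hpow : ∀ r : ℝ, Continuous fun x : ℝ => max (x - r) 0 ^ (H - 1/2) := fun r =>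
    ((continuous_id.sub continuous_const).max continuous_const).rpow_const
      fun _ => Or.inr (by linarith)
  exact (hpow s).sub (hpow t)

theorem incrementKernel_zero_one_le_rpow (hH : H ≤ 3/2) {x : ℝ} (hx : 1 < x) :
    incrementKernel H 0 1 x ≤ x ^ (H - 3/2) := by
  have hx0 : 0 < x := by linarith
  have hx1 : 0 < x - 1 := by linarith
  rw [incrementKernel, sub_zero, max_eq_left hx0.le, max_eq_left hx1.le,
    show H - 1/2 = (H - 3/2) + 1 by ring, rpow_add_one hx0.ne', rpow_add_one hx1.ne']
  have := rpow_le_rpow_of_nonpos hx1 (by linarith : x - 1 ≤ x) (by linarith : H - 3/2 ≤ 0)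
  nlinarith

theorem integrable_incrementKernel_zero_one_sq (hH : 1/2 < H) (hH1 : H < 1) :
    Integrable (fun x => incrementKernel H 0 1 x ^ 2) := by
  have hcont : Continuous fun x => incrementKernel H 0 1 x ^ 2 :=
    (continuous_incrementKernel hH 0 1).pow 2
  have hIic : IntegrableOn (fun x => incrementKernel H 0 1 x ^ 2) (Iic 1) := by
    rw [← Iic_union_Icc_eq_Iic zero_le_one]
    refine IntegrableOn.union ?_ hcont.integrableOn_Icc
    refine integrableOn_zero.congr_fun (fun x hx => ?_) measurableSet_Iic
    simp [incrementKernel_eq_zero_of_le (mem_Iic.1 hx) (mem_Iic.1 hx |>.trans zero_le_one)]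
  have hIoi : IntegrableOn (fun x => incrementKernel H 0 1 x ^ 2) (Ioi 1) := by
    refine (integrableOn_Ioi_rpow_of_lt (by linarith : 2 * (H - 3/2) < -1) zero_lt_one).mono'
      hcont.aestronglyMeasurable.restrict ?_
    filter_upwards [ae_restrict_mem measurableSet_Ioi] with x (hx : 1 < x)
    have hK := incrementKernel_nonneg hH.le zero_le_one x
    rw [norm_pow, Real.norm_of_nonneg hK, ← sq_rpow_eq_rpow_two_mul (by linarith)]
    exact pow_le_pow_left₀ hK (incrementKernel_zero_one_le_rpow (by linarith) hx) 2
  rw [← integrableOn_univ, ← Iic_union_Ioi (a := (1 : ℝ))]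
  exact hIic.union hIoi

theorem integrable_incrementKernel_sq (hH : 1/2 < H) (hH1 : H < 1) (s t : ℝ) :
    Integrable (fun x => incrementKernel H s t x ^ 2) := by
  wlog hst : s ≤ t generalizing s t
  · simpa only [incrementKernel_sq_swap] using this t s (le_of_not_ge hst)
  rcases hst.eq_or_lt with rfl | hst
  · simp [incrementKernel]
  simp_rw [incrementKernel_sq_eq_scale hst]
  exact (((integrable_incrementKernel_zero_one_sq hH hH1).comp_div
    (sub_pos.2 hst).ne').comp_sub_right s).const_mul _

theorem integral_incrementKernel_sq (hH : 1/2 < H) (s t : ℝ) :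
    ∫ x, incrementKernel H s t x ^ 2 = |t - s| ^ (2 * H) * kernelConst H := by
  wlog hst : s ≤ t generalizing s t
  · simpa only [incrementKernel_sq_swap, abs_sub_comm] using this t s (le_of_not_ge hst)
  rcases hst.eq_or_lt with rfl | hst
  · simp [incrementKernel, zero_rpow (by linarith : 2 * H ≠ 0)]
  have hτ : 0 < t - s := sub_pos.2 hst
  simp_rw [incrementKernel_sq_eq_scale hst]
  rw [integral_const_mul,
    integral_sub_right_eq_self (fun y => incrementKernel H 0 1 (y / (t - s)) ^ 2),
    Measure.integral_comp_div (fun y => incrementKernel H 0 1 y ^ 2), smul_eq_mul, ← mul_assoc,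
    abs_of_pos hτ, ← rpow_add_one hτ.ne', kernelConst]
  ring_nf

theorem integrable_incrementKernel_mul (hH : 1/2 < H) (hH1 : H < 1) (s₁ t₁ s₂ t₂ : ℝ) :
    Integrable (fun x => incrementKernel H s₁ t₁ x * incrementKernel H s₂ t₂ x) := by
  have i := integrable_incrementKernel_sq hH hH1
  simp_rw [incrementKernel_mul_eq]
  exact ((((i s₁ t₂).add (i s₂ t₁)).sub (i s₁ s₂)).sub (i t₁ t₂)).div_const 2

theorem integral_incrementKernel_mul (hH : 1/2 < H) (hH1 : H < 1) (s₁ t₁ s₂ t₂ : ℝ) :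
    ∫ x, incrementKernel H s₁ t₁ x * incrementKernel H s₂ t₂ x =
      (|t₂ - s₁| ^ (2 * H) + |t₁ - s₂| ^ (2 * H) - |s₂ - s₁| ^ (2 * H) - |t₂ - t₁| ^ (2 * H)) / 2
        * kernelConst H := by
  have i := integrable_incrementKernel_sq hH hH1
  simp_rw [incrementKernel_mul_eq]
  rw [integral_div, integral_sub ?_ (i _ _), integral_sub ?_ (i _ _),
    integral_add (i _ _) (i _ _)]
  · simp only [integral_incrementKernel_sq hH]
    ring
  · exact (i _ _).add (i _ _)
  · exact ((i _ _).add (i _ _)).sub (i _ _)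

theorem integral_incrementKernel_mul_eq_mu (hH : 1/2 < H) (hH1 : H < 1) {x u₂ : ℝ} (hx : 0 ≤ x)
    (hu₂ : 0 ≤ u₂) (u₁ : ℝ) :
    ∫ y, incrementKernel H 0 u₁ y * incrementKernel H x (x + u₂) y =
      mu H x u₁ u₂ * kernelConst H := by
  rw [integral_incrementKernel_mul hH hH1, mu, sub_zero, sub_zero, abs_of_nonneg hx,
    abs_of_nonneg (by linarith : 0 ≤ x + u₂), abs_sub_comm u₁ x]
  ring

theorem setIntegral_Ioc_incrementKernel_sq (hH : 1/2 < H) {a t : ℝ} (ha : 0 ≤ a) (hat : a ≤ t) :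
    ∫ x in Ioc 0 a, incrementKernel H 0 t x ^ 2 = a ^ (2 * H) / (2 * H) := by
  have hpow : EqOn (fun x => incrementKernel H 0 t x ^ 2) (fun x => x ^ (2 * H - 1)) (Ioc 0 a) :=
    fun x hx => by
      dsimp only
      rw [incrementKernel_eq_rpow hH hx.1.le (hx.2.trans hat), sub_zero,
        sq_rpow_eq_rpow_two_mul hx.1.le]
      ring_nf
  rw [setIntegral_congr_fun measurableSet_Ioc hpow, ← intervalIntegral.integral_of_le ha,
    integral_rpow (Or.inl (by linarith)), sub_add_cancel, zero_rpow (by linarith), sub_zero]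

theorem one_div_le_kernelConst (hH : 1/2 < H) (hH1 : H < 1) : 1 / (2 * H) ≤ kernelConst H := by
  have h := setIntegral_le_integral (s := Ioc 0 1) (integrable_incrementKernel_zero_one_sq hH hH1)
    (.of_forall fun x => sq_nonneg (incrementKernel H 0 1 x))
  rwa [setIntegral_Ioc_incrementKernel_sq hH zero_le_one le_rfl, one_rpow] at h

theorem kernelConst_pos (hH : 1/2 < H) (hH1 : H < 1) : 0 < kernelConst H :=
  lt_of_lt_of_le (by positivity) (one_div_le_kernelConst hH hH1)

end Kernel

theorem mu_interlaced_symm (H : ℝ) {a c : ℝ} (ha : 0 ≤ a) (hc : 0 ≤ c) (b : ℝ) :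
    mu H c (c + b) (b + a) = mu H a (a + b) (b + c) := by
  simp only [mu]
  rw [show c + (b + a) - (c + b) = a by ring, show a + (b + c) - (a + b) = c by ring,
    show c - (c + b) = -b by ring, show a - (a + b) = -b by ring,
    show c + (b + a) = a + (b + c) by ring, abs_of_nonneg ha, abs_of_nonneg hc]
  ring

theorem mu_interlaced_sq_le {H : ℝ} (hH : 1/2 < H) (hH1 : H < 1) {a b c : ℝ} (ha : 0 ≤ a)
    (hb : 0 ≤ b) (hc : 0 ≤ c) :
    mu H a (a + b) (b + c) ^ 2 ≤ (a + b) ^ (2 * H) * (b + c) ^ (2 * H)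
      - (b + c) ^ (2 * H) * a ^ (2 * H) / (2 * H * kernelConst H) := by
  have hC := kernelConst_pos hH hH1
  have hfi : Integrable (fun x => incrementKernel H 0 (a + b) x ^ 2) :=
    integrable_incrementKernel_sq hH hH1 _ _
  have hf : ∫ x, incrementKernel H 0 (a + b) x ^ 2 = (a + b) ^ (2 * H) * kernelConst H := by
    rw [integral_incrementKernel_sq hH, sub_zero, abs_of_nonneg (by linarith)]
  have hg : ∫ x, incrementKernel H a (a + (b + c)) x ^ 2 = (b + c) ^ (2 * H) * kernelConst H := by
    rw [integral_incrementKernel_sq hH, add_sub_cancel_left, abs_of_nonneg (by linarith)]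
  have hf_Ioi : ∫ x in Ioi a, incrementKernel H 0 (a + b) x ^ 2 ≤
      (a + b) ^ (2 * H) * kernelConst H - a ^ (2 * H) / (2 * H) := by
    have hsplit := intervalIntegral.integral_Iic_add_Ioi (b := a) hfi.integrableOn hfi.integrableOn
    have hf_Iic := setIntegral_mono_set hfi.integrableOn (.of_forall fun x => sq_nonneg _)
      (Ioc_subset_Iic_self (a := 0) (b := a)).eventuallyLE
    rw [setIntegral_Ioc_incrementKernel_sq hH ha (by linarith)] at hf_Iic
    linarith
  have hCS : (∫ x, incrementKernel H 0 (a + b) x * incrementKernel H a (a + (b + c)) x) ^ 2 ≤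
      (∫ x in Ioi a, incrementKernel H 0 (a + b) x ^ 2)
        * ∫ x, incrementKernel H a (a + (b + c)) x ^ 2 :=
    sq_integral_mul_le_setIntegral_sq_mul_integral_sq
      (fun x (hx : ¬a < x) => incrementKernel_eq_zero_of_le (not_lt.1 hx) (by linarith)) hfi
      (integrable_incrementKernel_sq hH hH1 _ _) (integrable_incrementKernel_mul hH hH1 _ _ _ _)
  rw [integral_incrementKernel_mul_eq_mu hH hH1 ha (by linarith), hg] at hCS
  have key := hCS.trans (mul_le_mul_of_nonneg_right hf_Ioi (by positivity))
  refine le_of_mul_le_mul_right ?_ (pow_pos hC 2)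
  convert key using 1
  · ring
  · field_simp

/-- Local non-determinism lower bound for the determinant of the covariance matrix of
`(B_{t₁} - B_{s₁}, B_{t₂} - B_{s₂})` in the regime `s₁ < s₂ < t₁ < t₂`, with
`a = s₂ - s₁`, `b = t₁ - s₂`, `c = t₂ - t₁`. -/
theorem det_cov_lower_bound_interlaced (H : ℝ) (hH : H ∈ Ioo (2/3 : ℝ) 1) :
    ∃ δ ∈ Ioo (0 : ℝ) 1, ∀ a b c : ℝ, 0 < a → 0 < b → 0 < c →
      (a + b) ^ (2*H) * (b + c) ^ (2*H) - mu H a (a + b) (b + c) ^ 2 ≥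
        δ * ((a + b) ^ (2*H) * c ^ (2*H) + (b + c) ^ (2*H) * a ^ (2*H)) := by
  obtain ⟨hH23, hH1⟩ := hH
  have hH : 1/2 < H := by linarith
  have hC := kernelConst_pos hH hH1
  have hHC : 1 ≤ 2 * H * kernelConst H := by
    rw [← div_le_iff₀' (by linarith)]
    exact one_div_le_kernelConst hH hH1
  refine ⟨1 / (4 * H * kernelConst H), ⟨by positivity, ?_⟩, fun a b c ha hb hc => ?_⟩
  · rw [div_lt_one (by positivity)]
    linarith
  have h₁ := mu_interlaced_sq_le hH hH1 ha.le hb.le hc.le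
  have h₂ := mu_interlaced_sq_le hH hH1 hc.le hb.le ha.le
  rw [mu_interlaced_symm H ha.le hc.le, add_comm c b, add_comm b a] at h₂
  have hδ : 1 / (4 * H * kernelConst H)
        * ((a + b) ^ (2*H) * c ^ (2*H) + (b + c) ^ (2*H) * a ^ (2*H))
      = ((a + b) ^ (2*H) * c ^ (2*H) / (2 * H * kernelConst H)
        + (b + c) ^ (2*H) * a ^ (2*H) / (2 * H * kernelConst H)) / 2 := by
    field_simp
    ring
  rw [ge_iff_le, hδ]
  linarith
end

section
/- Let $H\in(\tfrac23,1)$ and let $q\ge1$ be an integer. There exists a constant $K>0$, depending only on $H$ and $q$, such that for all $x>0$ and all $0<v_1\le w_1$, $0<v_2\le w_2$ with $w_1-v_1\le1$ and $w_2-v_2\le1$, one has $G^{(q)}_{1,x}(v_1,v_2) \le K\, G^{(q)}_{1,x}(w_1,w_2)$. -/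
/-!
For `2H ≥ 1` the map `t ↦ |t|^{2H}` is convex, so its increments over an interval of fixed
length grow with the position of the interval. `μ_H(x,u₁,u₂)` is (half) the difference of two
such increments, in two ways: increments of length `u₂` at `x` and at `x - u₁`, or increments of
length `u₁` ending at `x + u₂` and at `x`. Hence `μ_H(x,·,·)` vanishes at `u₁ = 0` and is
nondecreasing in each variable. The prefactors `(1 + u^{2H})^{-1/2-q}` decrease, but moving `u`
by at most `1` multiplies `1 + u^{2H}` by at most `1 + 2^{2H}`.
-/

open Real Set

/-- The kernel `G^{(q)}_{ε,x}(u₁,u₂) = (ε + u₁^{2H})^{-1/2-q} (ε + u₂^{2H})^{-1/2-q}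
μ_H(x,u₁,u₂)^{2q-1}`. -/
noncomputable def G (H : ℝ) (q : ℕ) (ε x u₁ u₂ : ℝ) : ℝ :=
  (ε + u₁ ^ (2*H)) ^ (-(1/2 : ℝ) - (q : ℝ)) * (ε + u₂ ^ (2*H)) ^ (-(1/2 : ℝ) - (q : ℝ)) *
    mu H x u₁ u₂ ^ (2*q - 1)

section Convexity

variable {𝕜 : Type*} [Field 𝕜] [LinearOrder 𝕜] [IsStrictOrderedRing 𝕜] {s : Set 𝕜} {f : 𝕜 → 𝕜}

theorem ConvexOn.sub_le_sub_of_sub_eq_sub (hf : ConvexOn 𝕜 s f) {a b c d : 𝕜}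
    (ha : a ∈ s) (hb : b ∈ s) (hc : c ∈ s) (hd : d ∈ s)
    (hab : a ≤ b) (hac : a ≤ c) (h : b - a = d - c) : f b - f a ≤ f d - f c := by
  rcases hab.eq_or_lt with rfl | hab
  · obtain rfl : d = c := by linarith
    simp
  have had : a < d := by linarith
  have hcd : c < d := by linarith
  have h₁ : slope f a b ≤ slope f a d :=
    hf.slope_mono ha ⟨hb, hab.ne'⟩ ⟨hd, had.ne'⟩ (by linarith)
  have h₂ : slope f d a ≤ slope f d c := hf.slope_mono hd ⟨ha, had.ne⟩ ⟨hc, hcd.ne⟩ hac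
  rw [slope_comm f d a, slope_comm f d c] at h₂
  have := h₁.trans h₂
  rwa [slope_def_field, slope_def_field, h, div_le_div_iff_of_pos_right (by linarith)] at this

end Convexity

theorem convexOn_abs_rpow {p : ℝ} (hp : 1 ≤ p) : ConvexOn ℝ univ (fun t : ℝ => |t| ^ p) := by
  have himg : abs '' univ = Ici (0 : ℝ) :=
    image_univ.trans (Set.ext fun t => ⟨by rintro ⟨y, rfl⟩; exact abs_nonneg y,
      fun ht => ⟨t, abs_of_nonneg ht⟩⟩)
  refine ConvexOn.comp (g := fun x : ℝ => x ^ p) ?_ (convexOn_univ_norm (E := ℝ)) ?_ <;> rw [himg]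
  · exact convexOn_rpow hp
  · exact monotoneOn_rpow_Ici_of_exponent_nonneg (by linarith)

section Covariance

variable {H x u₁ u₂ : ℝ}

theorem mu_eq_of_nonneg (hx : 0 ≤ x) (hu₂ : 0 ≤ u₂) :
    mu H x u₁ u₂ = ((|x + u₂| ^ (2*H) - |x| ^ (2*H))
      - (|x + u₂ - u₁| ^ (2*H) - |x - u₁| ^ (2*H))) / 2 := by
  rw [mu, abs_of_nonneg (by linarith : 0 ≤ x + u₂), abs_of_nonneg hx]
  ring

theorem mu_zero_left (hx : 0 ≤ x) (hu₂ : 0 ≤ u₂) : mu H x 0 u₂ = 0 := by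
  rw [mu_eq_of_nonneg hx hu₂, sub_zero, sub_zero, sub_self, zero_div]

theorem monotone_mu_left (hH : 1 ≤ 2*H) (hx : 0 ≤ x) (hu₂ : 0 ≤ u₂) :
    Monotone (fun u₁ => mu H x u₁ u₂) := by
  intro v w hvw
  have := (convexOn_abs_rpow hH).sub_le_sub_of_sub_eq_sub (a := x - w) (b := x + u₂ - w)
    (c := x - v) (d := x + u₂ - v) trivial trivial trivial trivial
    (by linarith) (by linarith) (by ring)
  simp only [mu_eq_of_nonneg hx hu₂]
  linarith

theorem monotoneOn_mu_right (hH : 1 ≤ 2*H) (hx : 0 ≤ x) (hu₁ : 0 ≤ u₁) :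
    MonotoneOn (fun u₂ => mu H x u₁ u₂) (Ici 0) := by
  intro v hv w hw hvw
  have := (convexOn_abs_rpow hH).sub_le_sub_of_sub_eq_sub (a := x + v - u₁) (b := x + v)
    (c := x + w - u₁) (d := x + w) trivial trivial trivial trivial
    (by linarith) (by linarith) (by ring)
  simp only [mu_eq_of_nonneg hx hv, mu_eq_of_nonneg hx hw]
  linarith

theorem mu_nonneg (hH : 1 ≤ 2*H) (hx : 0 ≤ x) (hu₁ : 0 ≤ u₁) (hu₂ : 0 ≤ u₂) :
    0 ≤ mu H x u₁ u₂ :=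
  mu_zero_left hx hu₂ ▸ monotone_mu_left hH hx hu₂ hu₁

theorem mu_le_mu {v₁ v₂ w₁ w₂ : ℝ} (hH : 1 ≤ 2*H) (hx : 0 ≤ x) (hw₁ : 0 ≤ w₁) (hv₂ : 0 ≤ v₂)
    (hvw₁ : v₁ ≤ w₁) (hvw₂ : v₂ ≤ w₂) : mu H x v₁ v₂ ≤ mu H x w₁ w₂ :=
  (monotone_mu_left hH hx hv₂ hvw₁).trans
    (monotoneOn_mu_right hH hx hw₁ hv₂ (mem_Ici.2 (hv₂.trans hvw₂)) hvw₂)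

end Covariance

section Prefactor

variable {p v w : ℝ}

theorem one_add_rpow_pos (hv : 0 ≤ v) : 0 < 1 + v ^ p := by
  have := rpow_nonneg hv p
  linarith

theorem one_add_rpow_le_mul (hp : 0 ≤ p) (hv : 0 ≤ v) (hvw : v ≤ w) (hwv : w ≤ v + 1) :
    1 + w ^ p ≤ (1 + 2 ^ p) * (1 + v ^ p) := by
  have hvp : 0 ≤ v ^ p := rpow_nonneg hv p
  have hw : w ^ p ≤ 2 ^ p * (1 + v ^ p) := by
    refine (rpow_le_rpow (hv.trans hvw) hwv hp).trans ?_
    rcases le_total v 1 with hv1 | hv1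
    · calc (v + 1) ^ p ≤ 2 ^ p := rpow_le_rpow (by linarith) (by linarith) hp
        _ ≤ 2 ^ p * (1 + v ^ p) := le_mul_of_one_le_right (by positivity) (by linarith)
    · calc (v + 1) ^ p ≤ (2 * v) ^ p := rpow_le_rpow (by linarith) (by linarith) hp
        _ = 2 ^ p * v ^ p := mul_rpow zero_le_two hv
        _ ≤ 2 ^ p * (1 + v ^ p) := by gcongr; linarith
  linarith

theorem rpow_neg_le_mul_rpow_neg_of_le_mul {a b c r : ℝ} (ha : 0 < a) (hb : 0 < b) (hc : 0 < c)
    (hba : b ≤ c * a) (hr : 0 ≤ r) : a ^ (-r) ≤ c ^ r * b ^ (-r) :=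
  calc a ^ (-r) = c ^ r * (c * a) ^ (-r) := by
        rw [mul_rpow hc.le ha.le, ← mul_assoc, ← rpow_add hc, add_neg_cancel, rpow_zero, one_mul]
    _ ≤ c ^ r * b ^ (-r) :=
        mul_le_mul_of_nonneg_left (rpow_le_rpow_of_nonpos hb hba (neg_nonpos.2 hr)) (by positivity)

theorem one_add_rpow_rpow_neg_le {r : ℝ} (hp : 0 ≤ p) (hr : 0 ≤ r) (hv : 0 ≤ v) (hvw : v ≤ w)
    (hwv : w ≤ v + 1) : (1 + v ^ p) ^ (-r) ≤ (1 + 2 ^ p) ^ r * (1 + w ^ p) ^ (-r) :=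
  rpow_neg_le_mul_rpow_neg_of_le_mul (one_add_rpow_pos hv) (one_add_rpow_pos (hv.trans hvw))
    (by positivity) (one_add_rpow_le_mul hp hv hvw hwv) hr

end Prefactor

theorem G_comparison_general (H : ℝ) (hH : H ∈ Ioo (2/3 : ℝ) 1) (q : ℕ) :
    ∃ K > (0 : ℝ), ∀ x v₁ v₂ w₁ w₂ : ℝ, 0 < x →
      0 < v₁ → v₁ ≤ w₁ → 0 < v₂ → v₂ ≤ w₂ → w₁ - v₁ ≤ 1 → w₂ - v₂ ≤ 1 →
      G H q 1 x v₁ v₂ ≤ K * G H q 1 x w₁ w₂ := by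
  have h2H : 1 ≤ 2 * H := by linarith [hH.1]
  have hr : (0 : ℝ) ≤ 1/2 + q := by positivity
  set c : ℝ := (1 + 2 ^ (2 * H)) ^ (1/2 + q : ℝ)
  have hB : ∀ u : ℝ, 0 ≤ u → 0 ≤ c * (1 + u ^ (2 * H)) ^ (-(1/2 + q : ℝ)) :=
    fun u hu => mul_nonneg (by positivity) (rpow_nonneg (one_add_rpow_pos hu).le _)
  refine ⟨c * c, by positivity, fun x v₁ v₂ w₁ w₂ hx hv₁ hvw₁ hv₂ hvw₂ hd₁ hd₂ => ?_⟩
  obtain ⟨hw₁, hw₂⟩ : 0 ≤ w₁ ∧ 0 ≤ w₂ := ⟨by linarith, by linarith⟩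
  have hA₁ := one_add_rpow_rpow_neg_le (p := 2 * H) (by linarith) hr hv₁.le hvw₁ (by linarith)
  have hA₂ := one_add_rpow_rpow_neg_le (p := 2 * H) (by linarith) hr hv₂.le hvw₂ (by linarith)
  have hμ₀ := mu_nonneg h2H hx.le hv₁.le hv₂.le
  have hμ := pow_le_pow_left₀ hμ₀ (mu_le_mu h2H hx.le hw₁ hv₂.le hvw₁ hvw₂) (2 * q - 1)
  have hexp : -(1/2 : ℝ) - q = -(1/2 + q) := by ring
  simp only [G, hexp]
  calc _ ≤ (c * (1 + w₁ ^ (2 * H)) ^ (-(1/2 + q : ℝ))) * (c * (1 + w₂ ^ (2 * H)) ^ (-(1/2 + q : ℝ)))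
          * mu H x w₁ w₂ ^ (2 * q - 1) :=
        mul_le_mul (mul_le_mul hA₁ hA₂ (rpow_nonneg (one_add_rpow_pos hv₂.le).le _) (hB w₁ hw₁))
          hμ (pow_nonneg hμ₀ _) (mul_nonneg (hB w₁ hw₁) (hB w₂ hw₂))
    _ = c * c * _ := by ring

/-- There is a constant `K`, depending only on `H` and `q`, such that
`G^{(q)}_{1,x}(v₁,v₂) ≤ K G^{(q)}_{1,x}(w₁,w₂)` whenever `0 < vᵢ ≤ wᵢ` and `wᵢ - vᵢ ≤ 1`. -/
theorem G_comparison (H : ℝ) (hH : H ∈ Ioo (2/3 : ℝ) 1) (q : ℕ) (hq : 1 ≤ q) :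
    ∃ K > (0 : ℝ), ∀ x v₁ v₂ w₁ w₂ : ℝ, 0 < x →
      0 < v₁ → v₁ ≤ w₁ → 0 < v₂ → v₂ ≤ w₂ → w₁ - v₁ ≤ 1 → w₂ - v₂ ≤ 1 →
      G H q 1 x v₁ v₂ ≤ K * G H q 1 x w₁ w₂ :=
  G_comparison_general H hH q
end

section
/- Let $H\in(\tfrac12,1)$. For all $x,z\ge0$ and $y>0$, $\tfrac12\big((x+y+z)^{2H}+y^{2H}-(x+y)^{2H}-(y+z)^{2H}\big) \le H(2H-1)\,x\,z\,y^{2H-2}$. (The left-hand side equals $\mu_H(x+y,\,x,\,z) = \mathbb{E}[B_x(B_{x+y+z}-B_{x+y})]$, the covariance of two fractional Brownian increments separated by a gap of length $y$.) -/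
open Real Set

/-! For `q = 2H ∈ [1, 2]` the left-hand side is half the increment of
`s ↦ (s + z)^q - s^q` between `s = y` and `s = x + y`. Its derivative
`q ((s + z)^(q-1) - s^(q-1))` is at most `q (q-1) s^(q-2) z` by concavity of `t ↦ t^(q-1)`,
and `s^(q-2) ≤ y^(q-2)` for `s ≥ y`; the mean value inequality concludes. -/

lemma rpow_add_sub_rpow_le {p b c : ℝ} (hp0 : 0 ≤ p) (hp1 : p ≤ 1) (hb : 0 < b) (hc : -b ≤ c) :
    (b + c) ^ p - b ^ p ≤ p * b ^ (p - 1) * c := by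
  have hcb : -1 ≤ c / b := by rw [le_div_iff₀ hb]; linarith
  have hbernoulli := rpow_one_add_le_one_add_mul_self hcb hp0 hp1
  have hfactor : b + c = b * (1 + c / b) := by field_simp
  calc (b + c) ^ p - b ^ p = b ^ p * ((1 + c / b) ^ p - 1) := by
        rw [hfactor, mul_rpow hb.le (by linarith)]; ring
    _ ≤ b ^ p * (p * (c / b)) := by gcongr; linarith
    _ = p * b ^ (p - 1) * c := by rw [rpow_sub_one hb.ne']; ring

lemma rpow_add_sub_rpow_increment_le {q a b z : ℝ} (hq1 : 1 ≤ q) (hq2 : q ≤ 2) (ha : 0 < a)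
    (hab : a ≤ b) (hz : 0 ≤ z) :
    ((b + z) ^ q - b ^ q) - ((a + z) ^ q - a ^ q) ≤ q * (q - 1) * a ^ (q - 2) * z * (b - a) := by
  set f : ℝ → ℝ := fun s => (s + z) ^ q - s ^ q
  have hf_deriv : ∀ s, 0 < s → HasDerivAt f (q * (s + z) ^ (q - 1) - q * s ^ (q - 1)) s := by
    intro s hs
    have hsz : s + z ≠ 0 := by positivity
    have hshift : HasDerivAt (fun s => (s + z) ^ q) (q * (s + z) ^ (q - 1)) s := by
      simpa using ((hasDerivAt_id s).add_const z).rpow_const (p := q) (Or.inl hsz)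
    exact hshift.sub (hasDerivAt_rpow_const (Or.inl hs.ne'))
  have hf_diff : DifferentiableOn ℝ f (Ici a) := fun s hs =>
    (hf_deriv s (ha.trans_le hs)).differentiableAt.differentiableWithinAt
  refine (convex_Ici a).image_sub_le_mul_sub_of_deriv_le hf_diff.continuousOn
    (hf_diff.mono interior_subset) (fun s hs => ?_) a self_mem_Ici b hab hab
  rw [interior_Ici] at hs
  have hs0 : 0 < s := ha.trans hs
  rw [(hf_deriv s hs0).deriv]
  have hconcave : (s + z) ^ (q - 1) - s ^ (q - 1) ≤ (q - 1) * s ^ (q - 1 - 1) * z :=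
    rpow_add_sub_rpow_le (by linarith) (by linarith) hs0 (by linarith)
  have hmono : s ^ (q - 2) ≤ a ^ (q - 2) := rpow_le_rpow_of_nonpos ha hs.le (by linarith)
  rw [show q - 1 - 1 = q - 2 by ring] at hconcave
  calc q * (s + z) ^ (q - 1) - q * s ^ (q - 1) = q * ((s + z) ^ (q - 1) - s ^ (q - 1)) := by ring
    _ ≤ q * ((q - 1) * s ^ (q - 2) * z) := by gcongr
    _ ≤ q * ((q - 1) * a ^ (q - 2) * z) := by gcongr
    _ = q * (q - 1) * a ^ (q - 2) * z := by ring

/-- For `H ∈ (1/2,1)`, `x,z ≥ 0` and `y > 0`,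
`((x+y+z)^{2H} + y^{2H} - (x+y)^{2H} - (y+z)^{2H})/2 ≤ H(2H-1) x z y^{2H-2}`; the left-hand
side is the covariance `μ_H(x+y, x, z)` of two fractional Brownian increments separated
by a gap of length `y`. -/
theorem mu_gap_bound (H : ℝ) (hH : H ∈ Ioo (1/2 : ℝ) 1) (x z y : ℝ)
    (hx : 0 ≤ x) (hz : 0 ≤ z) (hy : 0 < y) :
    (1/2) * ((x + y + z) ^ (2*H) + y ^ (2*H) - (x + y) ^ (2*H) - (y + z) ^ (2*H)) ≤
      H * (2*H - 1) * x * z * y ^ (2*H - 2) := by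
  have h := rpow_add_sub_rpow_increment_le (q := 2 * H) (b := x + y) (by linarith [hH.1])
    (by linarith [hH.2]) hy (by linarith) hz
  rw [add_sub_cancel_right] at h
  linear_combination h / 2
end

section
/- Let $H\in(\tfrac12,1)$. For all $x,z>0$ and $y\ge0$, $\tfrac12\big((x+y+z)^{2H}+y^{2H}-(x+y)^{2H}-(y+z)^{2H}\big) \le H\,\min(x,z)\,\max(x,z)^{2H-1}$. (The left-hand side equals $\mu_H(x+y,\,x,\,z) = \mathbb{E}[B_x(B_{x+y+z}-B_{x+y})]$, the covariance of two fractional Brownian increments separated by a gap of length $y$.) -/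
open Real Set

/-! With `p = 2H ∈ [1, 2]`, the left-hand side is `g (y + x) - g y` for
`g s = (s + z) ^ p - s ^ p`. Since `t ↦ t ^ (p - 1)` is subadditive,
`g' s = p ((s + z) ^ (p - 1) - s ^ (p - 1)) ≤ p z ^ (p - 1)`, so the mean value inequality gives
the bound `p x z ^ (p - 1)`; exchanging the roles of `x` and `z` yields the `min`/`max` form. -/

section RpowIncrement

variable {p z : ℝ}

theorem hasDerivAt_rpow_add_sub_rpow (hp : 1 ≤ p) (s : ℝ) :
    HasDerivAt (fun s => (s + z) ^ p - s ^ p) (p * ((s + z) ^ (p - 1) - s ^ (p - 1))) s :=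
  (((hasDerivAt_id' s).add_const z).rpow_const (Or.inr hp)).fun_sub
    ((hasDerivAt_id' s).rpow_const (Or.inr hp)) |>.congr_deriv (by ring)

theorem deriv_rpow_add_sub_rpow_le (hp : 1 ≤ p) (hp₂ : p ≤ 2) (hz : 0 ≤ z) {s : ℝ} (hs : 0 ≤ s) :
    deriv (fun s => (s + z) ^ p - s ^ p) s ≤ p * z ^ (p - 1) := by
  rw [(hasDerivAt_rpow_add_sub_rpow hp s).deriv]
  have hsub : (s + z) ^ (p - 1) ≤ s ^ (p - 1) + z ^ (p - 1) :=
    rpow_add_le_add_rpow hs hz (by linarith) (by linarith)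
  nlinarith

theorem rpow_gap_increment_le (hp : 1 ≤ p) (hp₂ : p ≤ 2) {x y : ℝ}
    (hx : 0 ≤ x) (hy : 0 ≤ y) (hz : 0 ≤ z) :
    (x + y + z) ^ p + y ^ p - (x + y) ^ p - (y + z) ^ p ≤ p * x * z ^ (p - 1) := by
  have hdiff : Differentiable ℝ (fun s => (s + z) ^ p - s ^ p) := fun s =>
    (hasDerivAt_rpow_add_sub_rpow hp s).differentiableAt
  have h := (convex_Ici (0 : ℝ)).image_sub_le_mul_sub_of_deriv_le hdiff.continuous.continuousOn
    hdiff.differentiableOn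
    (fun s hs => deriv_rpow_add_sub_rpow_le hp hp₂ hz (interior_subset hs : s ∈ Ici 0))
    y hy (y + x) (add_nonneg hy hx) (le_add_of_nonneg_right hx)
  simp only [add_sub_cancel_left] at h
  rw [show x + y = y + x by ring]
  linarith

end RpowIncrement

/-- For `H ∈ (1/2,1)`, `x,z > 0` and `y ≥ 0`,
`((x+y+z)^{2H} + y^{2H} - (x+y)^{2H} - (y+z)^{2H})/2 ≤ H min(x,z) max(x,z)^{2H-1}`; the
left-hand side is the covariance `μ_H(x+y, x, z)` of two fractional Brownian increments
separated by a gap of length `y`. -/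
theorem mu_gap_bound_minmax (H : ℝ) (hH : H ∈ Ioo (1/2 : ℝ) 1) (x z y : ℝ)
    (hx : 0 < x) (hz : 0 < z) (hy : 0 ≤ y) :
    (1/2) * ((x + y + z) ^ (2*H) + y ^ (2*H) - (x + y) ^ (2*H) - (y + z) ^ (2*H)) ≤
      H * min x z * max x z ^ (2*H - 1) := by
  obtain ⟨hH₁, hH₂⟩ := hH
  have hp : 1 ≤ 2 * H := by linarith
  have hp₂ : 2 * H ≤ 2 := by linarith
  rcases le_total x z with hxz | hzx
  · rw [min_eq_left hxz, max_eq_right hxz]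
    linarith [rpow_gap_increment_le hp hp₂ hx.le hy hz.le]
  · rw [min_eq_right hzx, max_eq_left hzx]
    have h := rpow_gap_increment_le hp hp₂ hz.le hy hx.le
    rw [show z + y + x = x + y + z by ring, show z + y = y + z by ring,
      show y + x = x + y by ring] at h
    linarith
end
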